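/- arXiv:0902.1207 — 2 statements merged into one kernel-verified Lean document; each statement's English description precedes it below -/
import Mathlib

section
/- Let A be a real n×n matrix, B a real n×p matrix, and let T_s, S_s be real n×n_s matrices with S_sᵀ T_s = I_{n_s}. Set P_s = T_s S_sᵀ, A_s = S_sᵀ A T_s, and B_s = S_sᵀ B, and assume the function t ↦ exp(t A_s) B_s B_sᵀ exp(t A_sᵀ) is Bochner integrable on [0, ∞) (as holds when every eigenvalue of A_s has negative real part). Then the controllability Gramian of the projected system equals the stable part of the Gramian of the original system pushed forward by T_s: ∫₀^∞ exp(t (P_s A)) (P_s B) (P_s B)ᵀ exp(t (P_s A)ᵀ) dt = T_s ( ∫₀^∞ exp(t A_s) B_s B_sᵀ exp(t A_sᵀ) dt ) T_sᵀ; in particular the left-hand integrand is also integrable on [0, ∞). -/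
/-!
`T_s` intertwines the two drifts: `(T_s S_sᵀ A) T_s = T_s (S_sᵀ A T_s)`, hence term by term in
the exponential series `exp (t P_s A) T_s = T_s exp (t A_s)`. Since also `P_s B = T_s B_s`, the
projected Gramian integrand is `T_s (·) T_sᵀ` applied to the stable one, and this continuous
linear map commutes with the Bochner integral.
-/

open Matrix NormedSpace MeasureTheory

attribute [local instance] Matrix.normedAddCommGroup Matrix.normedSpace

namespace Matrix

variable {𝕂 : Type*} [RCLike 𝕂] {m n : Type*} [Fintype m] [DecidableEq m] [Fintype n]
  [DecidableEq n]

theorem pow_mul_eq_mul_pow_of_mul_eq {C : Matrix m n 𝕂} {X : Matrix n n 𝕂} {Y : Matrix m m 𝕂}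
    (h : Y * C = C * X) (k : ℕ) : Y ^ k * C = C * X ^ k := by
  induction k with
  | zero => simp
  | succ k ih =>
    rw [pow_succ', Matrix.mul_assoc, ih, ← Matrix.mul_assoc, h, Matrix.mul_assoc, ← pow_succ']

theorem exp_mul_eq_mul_exp_of_mul_eq {C : Matrix m n 𝕂} {X : Matrix n n 𝕂} {Y : Matrix m m 𝕂}
    (h : Y * C = C * X) : exp Y * C = C * exp X := by
  open scoped Norms.Operator in
  have hY := (exp_series_hasSum_exp' (𝕂 := 𝕂) Y).map (mulRightLinearMap m 𝕂 C)
    (continuous_id.matrix_mul continuous_const)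
  open scoped Norms.Operator in
  have hX := (exp_series_hasSum_exp' (𝕂 := 𝕂) X).map (mulLeftLinearMap n 𝕂 C)
    (continuous_const.matrix_mul continuous_id)
  simp only [Function.comp_def, mulRightLinearMap_apply, mulLeftLinearMap_apply, Matrix.smul_mul,
    Matrix.mul_smul, pow_mul_eq_mul_pow_of_mul_eq h] at hY hX
  exact hY.unique hX

theorem exp_smul_mul_mul (t : 𝕂) (C : Matrix m n 𝕂) (D : Matrix n m 𝕂) :
    exp (t • (C * D)) * C = C * exp (t • (D * C)) :=
  exp_mul_eq_mul_exp_of_mul_eq <| by rw [Matrix.smul_mul, Matrix.mul_smul, Matrix.mul_assoc]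

end Matrix

noncomputable def Matrix.mulLeftRightCLM {𝕂 : Type*} [RCLike 𝕂] {m n m' n' : Type*} [Fintype n]
    [Fintype n'] (C : Matrix m n 𝕂) (D : Matrix n' m' 𝕂) : Matrix n n' 𝕂 →L[𝕂] Matrix m m' 𝕂 :=
  LinearMap.toContinuousLinearMap (mulLeftLinearMap m' 𝕂 C ∘ₗ mulRightLinearMap n 𝕂 D)

@[simp]
theorem Matrix.mulLeftRightCLM_apply {𝕂 : Type*} [RCLike 𝕂] {m n m' n' : Type*} [Fintype n]
    [Fintype n'] (C : Matrix m n 𝕂) (D : Matrix n' m' 𝕂) (X : Matrix n n' 𝕂) :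
    mulLeftRightCLM C D X = C * X * D :=
  (Matrix.mul_assoc C X D).symm

noncomputable def gramianIntegrand {n p : Type*} [Fintype n] [DecidableEq n] [Fintype p]
    (A : Matrix n n ℝ) (B : Matrix n p ℝ) (t : ℝ) : Matrix n n ℝ :=
  exp (t • A) * B * Bᵀ * exp (t • Aᵀ)

theorem gramianIntegrand_mul {m n p : Type*} [Fintype m] [DecidableEq m] [Fintype n]
    [DecidableEq n] [Fintype p] (C : Matrix m n ℝ) (D : Matrix n m ℝ) (G : Matrix n p ℝ)
    (t : ℝ) : gramianIntegrand (C * D) (C * G) t = C * gramianIntegrand (D * C) G t * Cᵀ := by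
  have h := exp_smul_mul_mul t C D
  have hT : Cᵀ * exp (t • (C * D)ᵀ) = exp (t • (D * C)ᵀ) * Cᵀ := by
    rw [← transpose_smul, exp_transpose, ← transpose_mul, h, transpose_mul, ← exp_transpose,
      transpose_smul]
  simp only [gramianIntegrand, transpose_mul, Matrix.mul_assoc] at h hT ⊢
  rw [← Matrix.mul_assoc _ C, h, hT]
  simp only [Matrix.mul_assoc]

theorem projected_controllability_gramian_general
    {n ns p : ℕ}
    (A : Matrix (Fin n) (Fin n) ℝ) (B : Matrix (Fin n) (Fin p) ℝ)
    (Ts Ss : Matrix (Fin n) (Fin ns) ℝ)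
    (hint : @IntegrableOn _ _ _ _ SeminormedAddGroup.toContinuousENorm
      (fun t : ℝ => exp (t • (Ssᵀ * A * Ts)) * (Ssᵀ * B) * (Ssᵀ * B)ᵀ *
        exp (t • (Ssᵀ * A * Ts)ᵀ))
      (Set.Ioi 0) volume) :
    @IntegrableOn _ _ _ _ SeminormedAddGroup.toContinuousENorm
      (fun t : ℝ => exp (t • (Ts * Ssᵀ * A)) * (Ts * Ssᵀ * B) * (Ts * Ssᵀ * B)ᵀ *
        exp (t • (Ts * Ssᵀ * A)ᵀ))
      (Set.Ioi 0) volume ∧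
    (∫ t in Set.Ioi (0:ℝ),
        exp (t • (Ts * Ssᵀ * A)) * (Ts * Ssᵀ * B) * (Ts * Ssᵀ * B)ᵀ *
          exp (t • (Ts * Ssᵀ * A)ᵀ)) =
      Ts * (∫ t in Set.Ioi (0:ℝ),
        exp (t • (Ssᵀ * A * Ts)) * (Ssᵀ * B) * (Ssᵀ * B)ᵀ *
          exp (t • (Ssᵀ * A * Ts)ᵀ)) * Tsᵀ := by
  have hP : ∀ t, gramianIntegrand (Ts * Ssᵀ * A) (Ts * Ssᵀ * B) t =
      mulLeftRightCLM Ts Tsᵀ (gramianIntegrand (Ssᵀ * A * Ts) (Ssᵀ * B) t) := by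
    simpa only [Matrix.mul_assoc, mulLeftRightCLM_apply] using
      gramianIntegrand_mul Ts (Ssᵀ * A) (Ssᵀ * B)
  simp only [gramianIntegrand] at hP
  simp only [hP]
  exact ⟨(mulLeftRightCLM Ts Tsᵀ).integrable_comp hint,
    ((mulLeftRightCLM Ts Tsᵀ).integral_comp_comm hint).trans (mulLeftRightCLM_apply _ _ _)⟩

/-- The controllability Gramian of the system projected onto the stable subspace via
`P_s = T_s S_sᵀ` equals the Gramian of the stable sub-system `(A_s, B_s) = (S_sᵀ A T_s, S_sᵀ B)`
pushed forward by `T_s`. -/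
theorem projected_controllability_gramian
    {n ns p : ℕ}
    (A : Matrix (Fin n) (Fin n) ℝ) (B : Matrix (Fin n) (Fin p) ℝ)
    (Ts Ss : Matrix (Fin n) (Fin ns) ℝ)
    (hST : Ssᵀ * Ts = 1)
    (hint : @IntegrableOn _ _ _ _ SeminormedAddGroup.toContinuousENorm
      (fun t : ℝ => exp (t • (Ssᵀ * A * Ts)) * (Ssᵀ * B) * (Ssᵀ * B)ᵀ *
        exp (t • (Ssᵀ * A * Ts)ᵀ))
      (Set.Ioi 0) volume) :
    @IntegrableOn _ _ _ _ SeminormedAddGroup.toContinuousENorm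
      (fun t : ℝ => exp (t • (Ts * Ssᵀ * A)) * (Ts * Ssᵀ * B) * (Ts * Ssᵀ * B)ᵀ *
        exp (t • (Ts * Ssᵀ * A)ᵀ))
      (Set.Ioi 0) volume ∧
    (∫ t in Set.Ioi (0:ℝ),
        exp (t • (Ts * Ssᵀ * A)) * (Ts * Ssᵀ * B) * (Ts * Ssᵀ * B)ᵀ *
          exp (t • (Ts * Ssᵀ * A)ᵀ)) =
      Ts * (∫ t in Set.Ioi (0:ℝ),
        exp (t • (Ssᵀ * A * Ts)) * (Ssᵀ * B) * (Ssᵀ * B)ᵀ *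
          exp (t • (Ssᵀ * A * Ts)ᵀ)) * Tsᵀ :=
  projected_controllability_gramian_general A B Ts Ss hint
end

section
/- Let T be an invertible real n×n matrix written in block form T = [T_u T_s] with T_u of size n×n_u and T_s of size n×n_s (n = n_u + n_s), and let its inverse be written T⁻¹ = [S_uᵀ ; S_sᵀ] with S_u of size n×n_u and S_s of size n×n_s; hence S_uᵀ T_u = I, S_sᵀ T_s = I, S_uᵀ T_s = 0, S_sᵀ T_u = 0. Let W_c^u, W_o^u be n_u×n_u matrices and W_c^s, W_o^s be n_s×n_s matrices, and suppose there are invertible matrices Φ̃_u (n_u×n_u) and Φ̃_s (n_s×n_s) and matrices Σ_u, Σ_s with Φ̃_u⁻¹ W_c^u Φ̃_u⁻ᵀ = Φ̃_uᵀ W_o^u Φ̃_u = Σ_u and Φ̃_s⁻¹ W_c^s Φ̃_s⁻ᵀ = Φ̃_sᵀ W_o^s Φ̃_s = Σ_s. Define the Gramians of the original system by W_c = T_u W_c^u T_uᵀ + T_s W_c^s T_sᵀ and W_o = S_u W_o^u S_uᵀ + S_s W_o^s S_sᵀ, and define Φ = [T_u Φ̃_u T_s Φ̃_s]. Then Φ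 is invertible with Φ⁻¹ = [Φ̃_u⁻¹ S_uᵀ ; Φ̃_s⁻¹ S_sᵀ], and Φ balances the Gramians: Φ⁻¹ W_c Φ⁻ᵀ = Φᵀ W_o Φ = fromBlocks Σ_u 0 0 Σ_s (the block-diagonal matrix with blocks Σ_u and Σ_s). -/
/-! With `T = [T_u T_s]`, `U = [S_u S_s]` and `D = diag(Φ̃_u, Φ̃_s)` one has `Φ = T D`,
`Φ⁻¹ = D⁻¹ Uᵀ`, `W_c = T diag(W_c^u, W_c^s) Tᵀ` and `W_o = U diag(W_o^u, W_o^s) Uᵀ`.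
Since `Uᵀ T = 1`, the congruences `Φ⁻¹ W_c Φ⁻ᵀ` and `Φᵀ W_o Φ` collapse to
`D⁻¹ diag(W_c^u, W_c^s) D⁻ᵀ` and `Dᵀ diag(W_o^u, W_o^s) D`, which are computed blockwise. -/

open Matrix

namespace Matrix

variable {R k l m n p q r : Type*}

section Semiring

variable [Semiring R]

theorem fromRows_mul_fromCols_eq_one [Fintype n] [DecidableEq l] [DecidableEq m]
    {A₁ : Matrix l n R} {A₂ : Matrix m n R} {B₁ : Matrix n l R} {B₂ : Matrix n m R}
    (h₁₁ : A₁ * B₁ = 1) (h₁₂ : A₁ * B₂ = 0) (h₂₁ : A₂ * B₁ = 0) (h₂₂ : A₂ * B₂ = 1) :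
    fromRows A₁ A₂ * fromCols B₁ B₂ = 1 := by
  rw [fromRows_mul_fromCols, h₁₁, h₁₂, h₂₁, h₂₂, fromBlocks_one]

theorem fromBlocks_diag_mul_fromBlocks_diag [Fintype l] [Fintype m]
    (A : Matrix n l R) (D : Matrix p m R) (A' : Matrix l q R) (D' : Matrix m r R) :
    fromBlocks A 0 0 D * fromBlocks A' 0 0 D' = fromBlocks (A * A') 0 0 (D * D') := by
  simp [fromBlocks_multiply]

theorem fromRows_mul_eq_fromBlocks_diag_mul_fromRows [Fintype l] [Fintype m]
    (A : Matrix n l R) (D : Matrix p m R) (B : Matrix l k R) (C : Matrix m k R) :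
    fromRows (A * B) (D * C) = fromBlocks A 0 0 D * fromRows B C := by
  simp [fromBlocks_mul_fromRows]

theorem fromCols_mul_eq_fromCols_mul_fromBlocks_diag [Fintype l] [Fintype m]
    (B : Matrix k l R) (C : Matrix k m R) (A : Matrix l n R) (D : Matrix m p R) :
    fromCols (B * A) (C * D) = fromCols B C * fromBlocks A 0 0 D := by
  simp [fromCols_mul_fromBlocks]

theorem add_mul_mul_transpose_eq_fromCols_mul_fromBlocks_diag [Fintype l] [Fintype m]
    (A : Matrix k l R) (B : Matrix k m R) (V : Matrix l l R) (W : Matrix m m R) :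
    A * V * Aᵀ + B * W * Bᵀ = fromCols A B * fromBlocks V 0 0 W * (fromCols A B)ᵀ := by
  simp [fromCols_mul_fromBlocks, transpose_fromCols, fromCols_mul_fromRows]

end Semiring

section CommSemiring

variable [CommSemiring R] [Fintype n] [Fintype k] [DecidableEq k]

theorem mul_mul_mul_transpose_cancel {U T : Matrix n k R} (h : Uᵀ * T = 1)
    (P : Matrix m k R) (W : Matrix k k R) :
    P * Uᵀ * (T * W * Tᵀ) * (P * Uᵀ)ᵀ = P * W * Pᵀ := by
  have hT : Tᵀ * U = 1 := by rw [← transpose_transpose U, ← transpose_mul, h, transpose_one]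
  simp only [transpose_mul, transpose_transpose, Matrix.mul_assoc]
  rw [← Matrix.mul_assoc Uᵀ, h, Matrix.one_mul, ← Matrix.mul_assoc Tᵀ, hT, Matrix.one_mul]

theorem transpose_mul_mul_mul_cancel {U T : Matrix n k R} (h : Uᵀ * T = 1)
    (Q : Matrix k m R) (W : Matrix k k R) :
    (T * Q)ᵀ * (U * W * Uᵀ) * (T * Q) = Qᵀ * W * Q := by
  have hT : Tᵀ * U = 1 := by rw [← transpose_transpose U, ← transpose_mul, h, transpose_one]
  simp only [transpose_mul, Matrix.mul_assoc]
  rw [← Matrix.mul_assoc Uᵀ, h, Matrix.one_mul, ← Matrix.mul_assoc Tᵀ, hT, Matrix.one_mul]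

end CommSemiring

end Matrix

/-- The balancing transformation of the full system splits into separate balancing
transformations of the unstable- and stable-subspace dynamics: if `T = [T_u T_s]` is
invertible with inverse `[S_uᵀ ; S_sᵀ]`, and `Φ̃_u`, `Φ̃_s` balance the sub-system
Gramians, then `Φ = [T_u Φ̃_u  T_s Φ̃_s]` is invertible with inverse
`[Φ̃_u⁻¹ S_uᵀ ; Φ̃_s⁻¹ S_sᵀ]` and balances the Gramians of the full system. -/
theorem balancing_transformation_decouples
    {n nu ns : ℕ}
    (Tu Su : Matrix (Fin n) (Fin nu) ℝ) (Ts Ss : Matrix (Fin n) (Fin ns) ℝ)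
    -- `T = [T_u T_s]` is invertible with inverse `[S_uᵀ ; S_sᵀ]`:
    (hTinv_left : Suᵀ * Tu = 1) (hTinv_left' : Ssᵀ * Ts = 1)
    (hcross : Suᵀ * Ts = 0) (hcross' : Ssᵀ * Tu = 0)
    (hTinv_right : Tu * Suᵀ + Ts * Ssᵀ = 1)
    (Wcu Wou Sigu : Matrix (Fin nu) (Fin nu) ℝ)
    (Wcs Wos Sigs : Matrix (Fin ns) (Fin ns) ℝ)
    (Φu : Matrix (Fin nu) (Fin nu) ℝ) (hΦu : IsUnit Φu.det)
    (Φs : Matrix (Fin ns) (Fin ns) ℝ) (hΦs : IsUnit Φs.det)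
    (hbal_u_c : Φu⁻¹ * Wcu * (Φu⁻¹)ᵀ = Sigu) (hbal_u_o : Φuᵀ * Wou * Φu = Sigu)
    (hbal_s_c : Φs⁻¹ * Wcs * (Φs⁻¹)ᵀ = Sigs) (hbal_s_o : Φsᵀ * Wos * Φs = Sigs) :
    (fromRows (Φu⁻¹ * Suᵀ) (Φs⁻¹ * Ssᵀ)) * (fromCols (Tu * Φu) (Ts * Φs)) = 1 ∧
    (fromCols (Tu * Φu) (Ts * Φs)) * (fromRows (Φu⁻¹ * Suᵀ) (Φs⁻¹ * Ssᵀ)) = 1 ∧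
    (fromRows (Φu⁻¹ * Suᵀ) (Φs⁻¹ * Ssᵀ)) * (Tu * Wcu * Tuᵀ + Ts * Wcs * Tsᵀ) *
        (fromRows (Φu⁻¹ * Suᵀ) (Φs⁻¹ * Ssᵀ))ᵀ = fromBlocks Sigu 0 0 Sigs ∧
    (fromCols (Tu * Φu) (Ts * Φs))ᵀ * (Su * Wou * Suᵀ + Ss * Wos * Ssᵀ) *
        (fromCols (Tu * Φu) (Ts * Φs)) = fromBlocks Sigu 0 0 Sigs := by
  set T := fromCols Tu Ts
  set U := fromCols Su Ss
  set D := fromBlocks Φu 0 0 Φs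
  set D' := fromBlocks Φu⁻¹ 0 0 Φs⁻¹
  have hUT : Uᵀ * T = 1 := by
    rw [transpose_fromCols]
    exact fromRows_mul_fromCols_eq_one hTinv_left hcross hcross' hTinv_left'
  have hTU : T * Uᵀ = 1 := by rw [transpose_fromCols, fromCols_mul_fromRows, hTinv_right]
  have hD'D : D' * D = 1 := by
    rw [fromBlocks_diag_mul_fromBlocks_diag, nonsing_inv_mul _ hΦu, nonsing_inv_mul _ hΦs,
      fromBlocks_one]
  have hDD' : D * D' = 1 := by
    rw [fromBlocks_diag_mul_fromBlocks_diag, mul_nonsing_inv _ hΦu, mul_nonsing_inv _ hΦs,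
      fromBlocks_one]
  rw [fromRows_mul_eq_fromBlocks_diag_mul_fromRows, ← transpose_fromCols,
    fromCols_mul_eq_fromCols_mul_fromBlocks_diag,
    add_mul_mul_transpose_eq_fromCols_mul_fromBlocks_diag Tu Ts,
    add_mul_mul_transpose_eq_fromCols_mul_fromBlocks_diag Su Ss]
  refine ⟨?_, ?_, ?_, ?_⟩
  · rw [Matrix.mul_assoc, ← Matrix.mul_assoc Uᵀ, hUT, Matrix.one_mul, hD'D]
  · rw [Matrix.mul_assoc, ← Matrix.mul_assoc D, hDD', Matrix.one_mul, hTU]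
  · rw [mul_mul_mul_transpose_cancel hUT, fromBlocks_transpose, transpose_zero, transpose_zero,
      fromBlocks_diag_mul_fromBlocks_diag, fromBlocks_diag_mul_fromBlocks_diag, hbal_u_c, hbal_s_c]
  · rw [transpose_mul_mul_mul_cancel hUT, fromBlocks_transpose, transpose_zero, transpose_zero,
      fromBlocks_diag_mul_fromBlocks_diag, fromBlocks_diag_mul_fromBlocks_diag, hbal_u_o, hbal_s_o]
end
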